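/- arXiv:1710.08884 — 3 statements merged into one kernel-verified Lean document; each statement's English description precedes it below -/
import Mathlib

section
/- Let d ≥ 1, k ∈ {1,…,d}, ρ ∈ ℝ, λ ∈ (0,∞), r ∈ (0,∞), and define V(t,x) = exp(−λ|x^k − ρ|²/(r² − t)) for t < r² and x ∈ ℝ^d, where x^k is the k-th coordinate of x. Let a ∈ 𝕊 satisfy 0 ≤ a^{kk} ≤ 1/(4λ). Then for every t < r² and every x ∈ ℝ^d, ∂_t V(t,x) + Σ_{i,j} a^{ij} D_{ij} V(t,x) ≤ 0. -/
open Set MeasureTheory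

noncomputable section

namespace Krylov

attribute [local instance] Matrix.normedAddCommGroup Matrix.normedSpace

abbrev ES (d : ℕ) : Type := EuclideanSpace ℝ (Fin d)

/-- The parabolic cylinder `C_R = [0, R²) × B_R`. -/
def cyl (d : ℕ) (R : ℝ) : Set (ℝ × ES d) :=
  {q | q.1 ∈ Set.Ico (0 : ℝ) (R ^ 2) ∧ ‖q.2‖ < R}

/-- The shifted parabolic cylinder `C_R(t,x) = (t,x) + C_R`. -/
def cylAt {d : ℕ} (z : ℝ × ES d) (R : ℝ) : Set (ℝ × ES d) :=
  {q | q.1 - z.1 ∈ Set.Ico (0 : ℝ) (R ^ 2) ∧ ‖q.2 - z.2‖ < R}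

/-- Parabolic boundary of a set: closure minus the set itself. -/
def pbd {d : ℕ} (Q : Set (ℝ × ES d)) : Set (ℝ × ES d) := closure Q \ Q

/-- Spatial gradient, as a continuous linear functional. -/
def Dsp {d : ℕ} (φ : ℝ × ES d → ℝ) (q : ℝ × ES d) : ES d →L[ℝ] ℝ :=
  fderiv ℝ (fun y => φ (q.1, y)) q.2

/-- Spatial gradient, as a vector of `ES d`. -/
def gradv {d : ℕ} (φ : ℝ × ES d → ℝ) (q : ℝ × ES d) : ES d :=
  (EuclideanSpace.equiv (Fin d) ℝ).symm fun i => Dsp φ q (EuclideanSpace.single i (1 : ℝ))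

/-- Time derivative `∂_t φ`. -/
def ptd {d : ℕ} (φ : ℝ × ES d → ℝ) (q : ℝ × ES d) : ℝ :=
  deriv (fun s => φ (s, q.2)) q.1

/-- Spatial Hessian `D²φ` as a matrix. -/
def Hess {d : ℕ} (φ : ℝ × ES d → ℝ) (q : ℝ × ES d) : Matrix (Fin d) (Fin d) ℝ :=
  fun i j => fderiv ℝ (fun y => Dsp φ (q.1, y) (EuclideanSpace.single i (1 : ℝ))) q.2
    (EuclideanSpace.single j (1 : ℝ))

/-- Third order spatial derivatives. -/
def D3 {d : ℕ} (φ : ℝ × ES d → ℝ) (q : ℝ × ES d) (i j k : Fin d) : ℝ :=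
  fderiv ℝ (fun y => Hess φ (q.1, y) i j) q.2 (EuclideanSpace.single k (1 : ℝ))

/-- Spatial derivatives of the time derivative. -/
def Dptd {d : ℕ} (φ : ℝ × ES d → ℝ) (q : ℝ × ES d) (i : Fin d) : ℝ :=
  fderiv ℝ (fun y => ptd φ (q.1, y)) q.2 (EuclideanSpace.single i (1 : ℝ))

/-- Operator norm of a `d×d` matrix, via Euclidean spaces. -/
def opn {d : ℕ} (a : Matrix (Fin d) (Fin d) ℝ) : ℝ :=
  ‖LinearMap.toContinuousLinearMap (Matrix.toEuclideanLin a)‖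

/-- The quadratic form of a matrix. -/
def qf {d : ℕ} (a : Matrix (Fin d) (Fin d) ℝ) (l : ES d) : ℝ :=
  ∑ i, ∑ j, a i j * l i * l j

/-- The class `𝕊_δ` of symmetric matrices with quadratic form between `δ|l|²` and `δ⁻¹|l|²`. -/
def Sdelta (d : ℕ) (δ : ℝ) : Set (Matrix (Fin d) (Fin d) ℝ) :=
  {a | a.IsSymm ∧ ∀ l : ES d, δ * ‖l‖ ^ 2 ≤ qf a l ∧ qf a l ≤ δ⁻¹ * ‖l‖ ^ 2}

/-- `trace (a · D²φ) = ∑ aᵢⱼ Dᵢⱼφ`. -/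
def aHess {d : ℕ} (a : Matrix (Fin d) (Fin d) ℝ) (φ : ℝ × ES d → ℝ) (q : ℝ × ES d) : ℝ :=
  ∑ i, ∑ j, a i j * Hess φ q i j

/-- `φ ∈ C^{1,2}(Q)`: `∂_tφ, Dφ, D²φ` exist and are continuous in `Q`. -/
def IsC12 {d : ℕ} (Q : Set (ℝ × ES d)) (φ : ℝ × ES d → ℝ) : Prop :=
  (∀ q ∈ Q, DifferentiableAt ℝ (fun s => φ (s, q.2)) q.1) ∧
  ContinuousOn (ptd φ) Q ∧
  (∀ q ∈ Q, DifferentiableAt ℝ (fun y => φ (q.1, y)) q.2) ∧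
  ContinuousOn (Dsp φ) Q ∧
  (∀ q ∈ Q, ∀ i : Fin d,
    DifferentiableAt ℝ (fun y => Dsp φ (q.1, y) (EuclideanSpace.single i (1 : ℝ))) q.2) ∧
  ContinuousOn (Hess φ) Q

/-- `[φ]_{C^κ(Q)} ≤ M` for `κ ∈ (1,2]`. -/
def HSemiLE {d : ℕ} (κ : ℝ) (Q : Set (ℝ × ES d)) (φ : ℝ × ES d → ℝ) (M : ℝ) : Prop :=
  (∀ (t s : ℝ) (x : ES d), (t, x) ∈ Q → (s, x) ∈ Q →
    |φ (t, x) - φ (s, x)| ≤ M * |t - s| ^ (κ / 2)) ∧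
  (∀ (t : ℝ) (x y : ES d), (t, x) ∈ Q → (t, y) ∈ Q →
    ‖Dsp φ (t, x) - Dsp φ (t, y)‖ ≤ M * ‖x - y‖ ^ (κ - 1))

/-- `[φ]_{C^κ(Q)} ≤ M` for `κ ∈ (0,1]`. -/
def HSemiLE0 {d : ℕ} (κ : ℝ) (Q : Set (ℝ × ES d)) (φ : ℝ × ES d → ℝ) (M : ℝ) : Prop :=
  ∀ p ∈ Q, ∀ q ∈ Q,
    |φ p - φ q| ≤ M * (|p.1 - q.1| ^ (κ / 2) + ‖p.2 - q.2‖ ^ κ)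

/-- `[φ]_{C^κ(Q)} ≤ M` for general `κ ∈ (0,2]`. -/
def HSemiLEg {d : ℕ} (κ : ℝ) (Q : Set (ℝ × ES d)) (φ : ℝ × ES d → ℝ) (M : ℝ) : Prop :=
  if κ ≤ 1 then HSemiLE0 κ Q φ M else HSemiLE κ Q φ M

/-- Membership in `C^κ(Q)` for `κ ∈ (1,2]`. -/
def MemCk {d : ℕ} (κ : ℝ) (Q : Set (ℝ × ES d)) (φ : ℝ × ES d → ℝ) : Prop :=
  (∀ q ∈ Q, DifferentiableAt ℝ (fun y => φ (q.1, y)) q.2) ∧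
  ∃ M : ℝ, 0 ≤ M ∧ (∀ q ∈ Q, |φ q| ≤ M) ∧ (∀ q ∈ Q, ‖Dsp φ q‖ ≤ M) ∧ HSemiLE κ Q φ M

/-- Membership in `C^κ(Q)` for general `κ ∈ (0,2]`. -/
def MemCg {d : ℕ} (κ : ℝ) (Q : Set (ℝ × ES d)) (φ : ℝ × ES d → ℝ) : Prop :=
  ∃ M : ℝ, 0 ≤ M ∧ (∀ q ∈ Q, |φ q| ≤ M) ∧ HSemiLEg κ Q φ M ∧
    (1 < κ → (∀ q ∈ Q, DifferentiableAt ℝ (fun y => φ (q.1, y)) q.2) ∧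
      ∀ q ∈ Q, ‖Dsp φ q‖ ≤ M)

/-- `osc_Q f ≤ M`. -/
def OscLE {d : ℕ} (Q : Set (ℝ × ES d)) (f : ℝ × ES d → ℝ) (M : ℝ) : Prop :=
  ∀ p ∈ Q, ∀ q ∈ Q, f p - f q ≤ M

/-- `‖G‖_{L_p(Q)}`. -/
def LpN {d : ℕ} (p : ℝ) (Q : Set (ℝ × ES d)) (G : ℝ × ES d → ℝ) : ℝ :=
  (∫ q in Q, |G q| ^ p) ^ (1 / p)

/-- Hypotheses on the cut-off function `P`: convex, positively homogeneous of degree one,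
Lipschitz, with derivative in `𝕊_δ'` at every point of differentiability. -/
def PHyp (d : ℕ) (δ' : ℝ) (P : Matrix (Fin d) (Fin d) ℝ → ℝ) : Prop :=
  ConvexOn ℝ Set.univ P ∧
  (∀ c : ℝ, 0 ≤ c → ∀ m, P (c • m) = c * P m) ∧
  (∃ L : ℝ, ∀ m m', |P m - P m'| ≤ L * opn (m - m')) ∧
  (∀ (m : Matrix (Fin d) (Fin d) ℝ) (L : Matrix (Fin d) (Fin d) ℝ →L[ℝ] ℝ),
    HasFDerivAt P L m →
      ∃ a ∈ Sdelta d δ', ∀ b, L b = ∑ i, ∑ j, a i j * b i j)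

/-- `u` is a `C`-viscosity subsolution of `∂_t u + H(u, Du, D²u, t, x) = 0` in `Q`. -/
def ViscSubsol {d : ℕ} (H : ℝ → ES d → Matrix (Fin d) (Fin d) ℝ → ℝ → ES d → ℝ)
    (Q : Set (ℝ × ES d)) (u : ℝ × ES d → ℝ) : Prop :=
  ContinuousOn u Q ∧
  ∀ (z : ℝ × ES d) (r : ℝ), 0 < r → closure (cylAt z r) ⊆ Q →
    ∀ φ : ℝ × ES d → ℝ, ContinuousOn φ (cylAt z r) → IsC12 (cylAt z r) φ →
      (∀ q ∈ cylAt z r, u q - φ q ≤ u z - φ z) →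
      ∀ ρ : ℝ, 0 < ρ → ρ ≤ r → ∀ ε : ℝ, 0 < ε →
        0 < volume {q ∈ cylAt z ρ |
          -ε < ptd φ q + H (u q) (gradv φ q) (Hess φ q) q.1 q.2}

/-- `u` is a `C`-viscosity supersolution of `∂_t u + H(u, Du, D²u, t, x) = 0` in `Q`. -/
def ViscSupersol {d : ℕ} (H : ℝ → ES d → Matrix (Fin d) (Fin d) ℝ → ℝ → ES d → ℝ)
    (Q : Set (ℝ × ES d)) (u : ℝ × ES d → ℝ) : Prop :=
  ContinuousOn u Q ∧
  ∀ (z : ℝ × ES d) (r : ℝ), 0 < r → closure (cylAt z r) ⊆ Q →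
    ∀ φ : ℝ × ES d → ℝ, ContinuousOn φ (cylAt z r) → IsC12 (cylAt z r) φ →
      (∀ q ∈ cylAt z r, u z - φ z ≤ u q - φ q) →
      ∀ ρ : ℝ, 0 < ρ → ρ ≤ r → ∀ ε : ℝ, 0 < ε →
        0 < volume {q ∈ cylAt z ρ |
          ptd φ q + H (u q) (gradv φ q) (Hess φ q) q.1 q.2 < ε}

/-- A closed circular cone with vertex `y`, axis `u`, height and opening angle `ε`. -/
def coneAt {d : ℕ} (y u : ES d) (ε : ℝ) : Set (ES d) :=
  {x | ‖x - y‖ ≤ ε ∧ ‖x - y‖ * Real.cos ε ≤ (inner ℝ (x - y) u : ℝ)}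

/-- Uniform exterior cone condition for a bounded domain. -/
def ExtCone {d : ℕ} (Ω : Set (ES d)) : Prop :=
  ∃ ε : ℝ, 0 < ε ∧ ∀ y ∈ frontier Ω, ∃ u : ES d, ‖u‖ = 1 ∧ coneAt y u ε ⊆ Ωᶜ

/-!
The barrier depends on `x` only through the coordinate `x k`, so its spatial Hessian is
`V_uu e_k ⊗ e_k` and the operator reduces to `∂_t V + a^{kk} V_uu`. With `u = x k - ρ` and
`s = r² - t`, this equals `V · (λ u² (4 λ a^{kk} - 1) - 2 λ a^{kk} s) / s²`, and both terms of the
numerator are nonpositive because `0 ≤ a^{kk} ≤ 1/(4λ)`.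
-/

open Real

section CoordinateFunctions

variable {d : ℕ} {φ : ℝ × ES d → ℝ} {k : Fin d} {t : ℝ} {g g' : ℝ → ℝ}

theorem Dsp_apply_single_of_eq_comp_coord (hφ : ∀ y : ES d, φ (t, y) = g (y k))
    (hg : ∀ u, HasDerivAt g (g' u) u) (y : ES d) (i : Fin d) :
    Dsp φ (t, y) (EuclideanSpace.single i (1 : ℝ)) =
      g' (y k) * EuclideanSpace.single i (1 : ℝ) k := by
  have hF : HasFDerivAt (fun y' : ES d => φ (t, y'))
      (g' (y k) • (EuclideanSpace.proj k : ES d →L[ℝ] ℝ)) y := by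
    simp_rw [hφ]
    exact (hg (y k)).comp_hasFDerivAt y (EuclideanSpace.proj (𝕜 := ℝ) k).hasFDerivAt
  simp [Dsp, hF.fderiv]

theorem Hess_of_eq_comp_coord (hφ : ∀ y : ES d, φ (t, y) = g (y k))
    (hg : ∀ u, HasDerivAt g (g' u) u) {x : ES d} {g'' : ℝ} (hg' : HasDerivAt g' g'' (x k))
    (i j : Fin d) :
    Hess φ (t, x) i j =
      EuclideanSpace.single i (1 : ℝ) k * g'' * EuclideanSpace.single j (1 : ℝ) k := by
  have hF : HasFDerivAt (fun y : ES d => EuclideanSpace.single i (1 : ℝ) k * g' (y k))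
      (EuclideanSpace.single i (1 : ℝ) k • g'' • (EuclideanSpace.proj k : ES d →L[ℝ] ℝ)) x :=
    (hg'.comp_hasFDerivAt x (EuclideanSpace.proj (𝕜 := ℝ) k).hasFDerivAt).const_mul _
  have hDsp : (fun y => Dsp φ (t, y) (EuclideanSpace.single i (1 : ℝ))) =
      fun y : ES d => EuclideanSpace.single i (1 : ℝ) k * g' (y k) := by
    ext y
    rw [Dsp_apply_single_of_eq_comp_coord hφ hg, mul_comm]
  rw [Hess, hDsp, hF.fderiv, smul_apply, smul_apply,
    smul_eq_mul, smul_eq_mul, mul_assoc]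
  rfl

theorem aHess_of_eq_comp_coord (a : Matrix (Fin d) (Fin d) ℝ)
    (hφ : ∀ y : ES d, φ (t, y) = g (y k)) (hg : ∀ u, HasDerivAt g (g' u) u) {x : ES d}
    {g'' : ℝ} (hg' : HasDerivAt g' g'' (x k)) :
    aHess a φ (t, x) = a k k * g'' := by
  simp [aHess, Hess_of_eq_comp_coord hφ hg hg', PiLp.single_apply]

end CoordinateFunctions

theorem hasDerivAt_exp_neg_mul_sq_div (lam ρ s u : ℝ) :
    HasDerivAt (fun u => exp (-lam * (u - ρ) ^ 2 / s))
      (exp (-lam * (u - ρ) ^ 2 / s) * (-(2 * lam * (u - ρ)) / s)) u := by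
  have h : HasDerivAt (fun u => -lam * (u - ρ) ^ 2 / s) (-(2 * lam * (u - ρ)) / s) u :=
    ((((hasDerivAt_id' u).sub_const ρ).pow 2).const_mul (-lam)).div_const s |>.congr_deriv
      (by ring)
  exact h.exp

theorem hasDerivAt_deriv_exp_neg_mul_sq_div (lam ρ s u : ℝ) :
    HasDerivAt (fun u => exp (-lam * (u - ρ) ^ 2 / s) * (-(2 * lam * (u - ρ)) / s))
      (exp (-lam * (u - ρ) ^ 2 / s) * ((2 * lam * (u - ρ) / s) ^ 2 - 2 * lam / s)) u := by
  have h : HasDerivAt (fun u => -(2 * lam * (u - ρ)) / s) (-(2 * lam) / s) u :=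
    (((hasDerivAt_id' u).sub_const ρ).const_mul (2 * lam)).neg.div_const s |>.congr_deriv
      (by ring)
  exact (hasDerivAt_exp_neg_mul_sq_div lam ρ s u).mul h |>.congr_deriv (by ring)

theorem hasDerivAt_exp_div_const_sub (c R t : ℝ) (ht : t ≠ R) :
    HasDerivAt (fun t => exp (c / (R - t))) (exp (c / (R - t)) * (c / (R - t) ^ 2)) t := by
  have h : HasDerivAt (fun t => c / (R - t)) (c / (R - t) ^ 2) t :=
    (hasDerivAt_const t c).div ((hasDerivAt_id' t).const_sub R) (sub_ne_zero.2 ht.symm)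
      |>.congr_deriv (by ring)
  exact h.exp

theorem barrier_symbol_nonpos {lam α s : ℝ} (u : ℝ) (hlam : 0 < lam) (hα : 0 ≤ α)
    (hα' : α ≤ 1 / (4 * lam)) (hs : 0 < s) :
    -lam * u ^ 2 / s ^ 2 + α * ((2 * lam * u / s) ^ 2 - 2 * lam / s) ≤ 0 := by
  have h4 : 4 * lam * α ≤ 1 := by
    rw [le_div_iff₀ (by positivity)] at hα'
    linarith
  have hnum : lam * u ^ 2 * (4 * lam * α - 1) - 2 * lam * α * s ≤ 0 := by
    have : lam * u ^ 2 * (4 * lam * α - 1) ≤ 0 :=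
      mul_nonpos_of_nonneg_of_nonpos (by positivity) (by linarith)
    linarith [mul_nonneg (mul_nonneg hlam.le hα) hs.le]
  calc -lam * u ^ 2 / s ^ 2 + α * ((2 * lam * u / s) ^ 2 - 2 * lam / s)
      = (lam * u ^ 2 * (4 * lam * α - 1) - 2 * lam * α * s) / s ^ 2 := by
        field_simp
        ring
    _ ≤ 0 := div_nonpos_of_nonpos_of_nonneg hnum (sq_nonneg s)

theorem statement4_general (d : ℕ) (k : Fin d) (ρ lam r : ℝ)
    (hlam : 0 < lam)
    (a : Matrix (Fin d) (Fin d) ℝ)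
    (hakk : 0 ≤ a k k) (hakk' : a k k ≤ 1 / (4 * lam))
    (V : ℝ × ES d → ℝ)
    (hV : ∀ q : ℝ × ES d, V q = Real.exp (-lam * |q.2 k - ρ| ^ 2 / (r ^ 2 - q.1))) :
    ∀ q : ℝ × ES d, q.1 < r ^ 2 → ptd V q + aHess a V q ≤ 0 := by
  rintro ⟨t, x⟩ (ht : t < r ^ 2)
  have hV' (s : ℝ) (y : ES d) : V (s, y) = exp (-lam * (y k - ρ) ^ 2 / (r ^ 2 - s)) := by
    rw [hV, sq_abs]
  have htime : ptd V (t, x) = exp (-lam * (x k - ρ) ^ 2 / (r ^ 2 - t)) *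
      (-lam * (x k - ρ) ^ 2 / (r ^ 2 - t) ^ 2) := by
    simp only [ptd, hV']
    exact (hasDerivAt_exp_div_const_sub _ _ t ht.ne).deriv
  have hspace := aHess_of_eq_comp_coord a (hV' t)
    (hasDerivAt_exp_neg_mul_sq_div lam ρ _) (hasDerivAt_deriv_exp_neg_mul_sq_div lam ρ _ (x k))
  rw [htime, hspace, mul_left_comm, ← mul_add]
  exact mul_nonpos_of_nonneg_of_nonpos (exp_pos _).le
    (barrier_symbol_nonpos _ hlam hakk hakk' (sub_pos.2 ht))

/-- the barrier function `V` is a supersolution. -/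
theorem statement4 (d : ℕ) (hd : 1 ≤ d) (k : Fin d) (ρ lam r : ℝ)
    (hlam : 0 < lam) (hr : 0 < r)
    (a : Matrix (Fin d) (Fin d) ℝ) (ha : a.IsSymm)
    (hakk : 0 ≤ a k k) (hakk' : a k k ≤ 1 / (4 * lam))
    (V : ℝ × ES d → ℝ)
    (hV : ∀ q : ℝ × ES d, V q = Real.exp (-lam * |q.2 k - ρ| ^ 2 / (r ^ 2 - q.1))) :
    ∀ q : ℝ × ES d, q.1 < r ^ 2 → ptd V q + aHess a V q ≤ 0 :=
  statement4_general d k ρ lam r hlam a hakk hakk' V hV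

end Krylov
end
end

section
/- Let d ≥ 1, δ ∈ (0,1], r ∈ (0,∞), γ ∈ (0,2], M, θ ∈ [0,∞). Let v ∈ C^{1,2}(C_r) ∩ C(C̄_r) satisfy |v(r²,x)| ≤ M|x|^γ for all |x| ≤ r (values at t = r² taken via the continuous extension), and suppose that |∂_t v(t,x) + Σ_{i,j} a^{ij}(t,x) D_{ij}v(t,x)| ≤ θ in C_r for some 𝕊_δ-valued function a on C_r. Then there exists a constant N = N(d,δ,γ) such that for all t ∈ [0,r²], |v(t,0)| ≤ N (M + r^{−γ} sup_{C_r} |v|) (r²−t)^{γ/2} + θ(r²−t). -/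
open Set MeasureTheory

noncomputable section

namespace Krylov

attribute [local instance] Matrix.normedAddCommGroup Matrix.normedSpace

/-!
With `K = M + r^{-γ} S` and `μ = 2d/δ + 1`, the function
`B(t,x) = K (μ (r² - t) + |x|²)^{γ/2} + (θ + ε)(r² - t)` satisfies `∂_t B + aᵢⱼ Dᵢⱼ B ≤ -(θ + ε)`
in `C_r` and dominates `±v` on the parabolic boundary. At an interior minimum of `B ∓ v` the time
derivative is nonnegative and the spatial Hessian positive semidefinite, so its pairing with the
positive semidefinite `a` is nonnegative; this contradicts the strict inequality, hence `|v| ≤ B`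
on the closed cylinder. At `x = 0` this reads
`|v(t,0)| ≤ μ^{γ/2} K (r² - t)^{γ/2} + (θ + ε)(r² - t)`, and `ε → 0` gives the claim.
-/

open Filter Topology

theorem _root_.IsLocalMin.deriv_deriv_nonneg {f : ℝ → ℝ} {x₀ : ℝ} (hmin : IsLocalMin f x₀)
    (hc : ContinuousAt f x₀) : 0 ≤ deriv (deriv f) x₀ := by
  by_contra! hneg
  -- a negative second derivative would make `x₀` a local maximum too, so `f` is locally constant
  have hmax := isLocalMax_of_deriv_deriv_neg hneg hmin.deriv_eq_zero hc
  have hconst : f =ᶠ[𝓝 x₀] fun _ => f x₀ :=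
    (hmin.and hmax).mono fun x hx => le_antisymm hx.2 hx.1
  have hderiv : deriv f =ᶠ[𝓝 x₀] fun _ => 0 :=
    hconst.eventuallyEq_nhds.mono fun x hx => hx.deriv_eq.trans (deriv_const x _)
  rw [hderiv.deriv_eq, deriv_const] at hneg
  exact lt_irrefl _ hneg

theorem _root_.deriv_nonneg_of_isMinOn_Ico {f : ℝ → ℝ} {a b : ℝ} (hab : a < b)
    (hf : DifferentiableAt ℝ f a) (hmin : IsMinOn f (Ico a b) a) : 0 ≤ deriv f a := by
  have hloc : IsLocalMinOn f (Ici a) a :=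
    mem_of_superset (inter_mem_nhdsWithin _ (Iio_mem_nhds hab)) fun x hx =>
      hmin ⟨hx.1, hx.2⟩
  have hcone : (1 : ℝ) ∈ posTangentConeAt (Ici a) a :=
    mem_posTangentConeAt_of_segment_subset (by
      rw [segment_eq_Icc (by linarith)]; exact Icc_subset_Ici_self)
  simpa using hloc.hasFDerivWithinAt_nonneg hf.hasFDerivAt.hasFDerivWithinAt hcone

theorem _root_.le_of_forall_pos_le_add_mul {a b T : ℝ} (h : ∀ ε > 0, a ≤ b + ε * T) : a ≤ b := by
  have hlim : Tendsto (fun ε => b + ε * T) (𝓝[>] 0) (𝓝 b) :=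
    ((continuous_const.add (continuous_id.mul continuous_const)).tendsto' 0 b (by simp)).mono_left
      nhdsWithin_le_nhds
  exact ge_of_tendsto hlim (eventually_nhdsWithin_of_forall h)

theorem sq_rpow_half {x : ℝ} (hx : 0 ≤ x) (γ : ℝ) : (x ^ 2) ^ (γ / 2) = x ^ γ := by
  rw [← Real.rpow_natCast, ← Real.rpow_mul hx]
  congr 1
  ring

section Matrices
variable {d : ℕ}

theorem sum_mul_nonneg_of_posSemidef {a m : Matrix (Fin d) (Fin d) ℝ}
    (ha : a.PosSemidef) (hm : ∀ l, 0 ≤ qf m l) : 0 ≤ ∑ i, ∑ j, a i j * m i j := by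
  obtain ⟨n, v, rfl⟩ := Matrix.posSemidef_iff_eq_sum_vecMulVec.mp ha
  have hsum : ∑ i, ∑ j, (∑ k, Matrix.vecMulVec (v k) (star (v k))) i j * m i j
      = ∑ k, qf m (WithLp.toLp 2 (v k)) := by
    simp only [Matrix.sum_apply, Matrix.vecMulVec_apply, star_trivial, qf, Finset.sum_mul]
    simp_rw [Finset.sum_comm (s := Finset.univ (α := Fin d)) (t := Finset.univ (α := Fin n))]
    exact Finset.sum_congr rfl fun k _ => Finset.sum_congr rfl fun i _ =>
      Finset.sum_congr rfl fun j _ => by ring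
  rw [hsum]
  exact Finset.sum_nonneg fun k _ => hm _

theorem posSemidef_of_mem_Sdelta {δ : ℝ} (hδ : 0 ≤ δ) {a : Matrix (Fin d) (Fin d) ℝ}
    (ha : a ∈ Sdelta d δ) : a.PosSemidef := by
  refine Matrix.PosSemidef.of_dotProduct_mulVec_nonneg ?_ fun x => ?_
  · rw [Matrix.IsHermitian, Matrix.conjTranspose_eq_transpose_of_trivial]
    exact ha.1
  · have hqf : qf a (WithLp.toLp 2 x) = dotProduct (star x) (a.mulVec x) := by
      simp only [qf, dotProduct, Matrix.mulVec, Finset.mul_sum, Pi.star_apply, star_trivial]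
      exact Finset.sum_congr rfl fun i _ => Finset.sum_congr rfl fun j _ => by ring
    rw [← hqf]
    exact le_trans (by positivity) (ha.2 _).1

theorem trace_le_of_mem_Sdelta {δ : ℝ} {a : Matrix (Fin d) (Fin d) ℝ} (ha : a ∈ Sdelta d δ) :
    ∑ i, a i i ≤ d * δ⁻¹ := by
  have hdiag : ∀ i, a i i ≤ δ⁻¹ := fun i => by
    simpa [qf, PiLp.single_apply, PiLp.norm_single] using (ha.2 (EuclideanSpace.single i 1)).2
  simpa using Finset.sum_le_sum fun i (_ : i ∈ Finset.univ) => hdiag i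

end Matrices

section Cylinder
variable {d : ℕ} {R : ℝ}

theorem cyl_eq_prod (R : ℝ) : cyl d R = Ico 0 (R ^ 2) ×ˢ Metric.ball (0 : ES d) R := by
  ext q; simp [cyl]

theorem closure_cyl (hR : 0 < R) :
    closure (cyl d R) = Icc 0 (R ^ 2) ×ˢ Metric.closedBall (0 : ES d) R := by
  rw [cyl_eq_prod, closure_prod_eq, closure_Ico (by positivity), closure_ball _ hR.ne']

theorem isCompact_closure_cyl (hR : 0 < R) : IsCompact (closure (cyl d R)) := by
  rw [closure_cyl hR]
  exact isCompact_Icc.prod (isCompact_closedBall _ _)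

theorem eventually_mem_cyl {q : ℝ × ES d} (hq : q ∈ cyl d R) :
    ∀ᶠ y in 𝓝 q.2, (q.1, y) ∈ cyl d R := by
  filter_upwards [Metric.isOpen_ball.mem_nhds (mem_ball_zero_iff.2 hq.2)] with y hy
  exact ⟨hq.1, mem_ball_zero_iff.1 hy⟩

end Cylinder

section Linearity
variable {d : ℕ}

theorem apply_eq_sum_mul_single (T : ES d →L[ℝ] ℝ) (l : ES d) :
    T l = ∑ i, l i * T (EuclideanSpace.single i 1) := by
  conv_lhs => rw [← (EuclideanSpace.basisFun (Fin d) ℝ).sum_repr l]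
  simp [map_sum]

structure IsDiff12 (Q : Set (ℝ × ES d)) (φ : ℝ × ES d → ℝ) : Prop where
  time : ∀ q ∈ Q, DifferentiableAt ℝ (fun s => φ (s, q.2)) q.1
  space : ∀ q ∈ Q, DifferentiableAt ℝ (fun y => φ (q.1, y)) q.2
  grad : ∀ q ∈ Q, ∀ i : Fin d,
    DifferentiableAt ℝ (fun y => Dsp φ (q.1, y) (EuclideanSpace.single i 1)) q.2

theorem IsC12.isDiff12 {Q : Set (ℝ × ES d)} {φ : ℝ × ES d → ℝ} (h : IsC12 Q φ) :
    IsDiff12 Q φ :=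
  ⟨h.1, h.2.2.1, h.2.2.2.2.1⟩

variable {f g : ℝ × ES d → ℝ} {q : ℝ × ES d} (c : ℝ)

theorem ptd_sub_const_mul (hf : DifferentiableAt ℝ (fun s => f (s, q.2)) q.1)
    (hg : DifferentiableAt ℝ (fun s => g (s, q.2)) q.1) :
    ptd (fun p => f p - c * g p) q = ptd f q - c * ptd g q := by
  simp only [ptd]
  rw [deriv_fun_sub hf (hg.const_mul c), deriv_const_mul _ hg]

theorem Dsp_sub_const_mul (hf : DifferentiableAt ℝ (fun y => f (q.1, y)) q.2)
    (hg : DifferentiableAt ℝ (fun y => g (q.1, y)) q.2) :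
    Dsp (fun p => f p - c * g p) q = Dsp f q - c • Dsp g q := by
  simp only [Dsp]
  rw [fderiv_fun_sub hf (hg.const_mul c), fderiv_const_mul hg]

theorem Dsp_sub_const_mul_eventuallyEq
    (hf : ∀ᶠ y in 𝓝 q.2, DifferentiableAt ℝ (fun y' => f (q.1, y')) y)
    (hg : ∀ᶠ y in 𝓝 q.2, DifferentiableAt ℝ (fun y' => g (q.1, y')) y) (i : Fin d) :
    (fun y => Dsp (fun p => f p - c * g p) (q.1, y) (EuclideanSpace.single i 1)) =ᶠ[𝓝 q.2]
      fun y => Dsp f (q.1, y) (EuclideanSpace.single i 1)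
        - c * Dsp g (q.1, y) (EuclideanSpace.single i 1) := by
  filter_upwards [hf, hg] with y hfy hgy
  rw [Dsp_sub_const_mul (q := (q.1, y)) c hfy hgy]
  rfl

theorem Hess_sub_const_mul
    (hf : ∀ᶠ y in 𝓝 q.2, DifferentiableAt ℝ (fun y' => f (q.1, y')) y)
    (hg : ∀ᶠ y in 𝓝 q.2, DifferentiableAt ℝ (fun y' => g (q.1, y')) y)
    (hf2 : ∀ i : Fin d,
      DifferentiableAt ℝ (fun y => Dsp f (q.1, y) (EuclideanSpace.single i 1)) q.2)
    (hg2 : ∀ i : Fin d,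
      DifferentiableAt ℝ (fun y => Dsp g (q.1, y) (EuclideanSpace.single i 1)) q.2) :
    Hess (fun p => f p - c * g p) q = Hess f q - c • Hess g q := by
  ext i j
  simp only [Hess]
  rw [(Dsp_sub_const_mul_eventuallyEq c hf hg i).fderiv_eq,
    fderiv_fun_sub (hf2 i) ((hg2 i).const_mul c), fderiv_const_mul (hg2 i)]
  rfl

variable {Q : Set (ℝ × ES d)}

theorem IsDiff12.sub_const_mul (hQ : ∀ q ∈ Q, ∀ᶠ y in 𝓝 q.2, (q.1, y) ∈ Q)
    (hf : IsDiff12 Q f) (hg : IsDiff12 Q g) :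
    IsDiff12 Q (fun p => f p - c * g p) where
  time q hq := (hf.time q hq).sub ((hg.time q hq).const_mul c)
  space q hq := (hf.space q hq).sub ((hg.space q hq).const_mul c)
  grad q hq i := by
    have hfy := (hQ q hq).mono fun y hy => hf.space (q.1, y) hy
    have hgy := (hQ q hq).mono fun y hy => hg.space (q.1, y) hy
    exact ((Dsp_sub_const_mul_eventuallyEq c hfy hgy i).differentiableAt_iff).2
      ((hf.grad q hq i).sub ((hg.grad q hq i).const_mul c))

theorem IsDiff12.ptd_add_aHess_sub_const_mul (hQ : ∀ q ∈ Q, ∀ᶠ y in 𝓝 q.2, (q.1, y) ∈ Q)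
    (hf : IsDiff12 Q f) (hg : IsDiff12 Q g) (hq : q ∈ Q) (a : Matrix (Fin d) (Fin d) ℝ) :
    ptd (fun p => f p - c * g p) q + aHess a (fun p => f p - c * g p) q
      = ptd f q + aHess a f q - c * (ptd g q + aHess a g q) := by
  have hHess := Hess_sub_const_mul c ((hQ q hq).mono fun y hy => hf.space (q.1, y) hy)
    ((hQ q hq).mono fun y hy => hg.space (q.1, y) hy) (hf.grad q hq) (hg.grad q hq)
  have haHess : aHess a (fun p => f p - c * g p) q = aHess a f q - c * aHess a g q := by
    simp only [aHess, hHess, Matrix.sub_apply, Matrix.smul_apply, smul_eq_mul, Finset.mul_sum,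
      ← Finset.sum_sub_distrib]
    exact Finset.sum_congr rfl fun i _ => Finset.sum_congr rfl fun j _ => by ring
  rw [ptd_sub_const_mul c (hf.time q hq) (hg.time q hq), haHess]
  ring

end Linearity

section MinimumPrinciple
variable {d : ℕ}

theorem qf_Hess_nonneg_of_isLocalMin {φ : ℝ × ES d → ℝ} {q : ℝ × ES d}
    (hmin : IsLocalMin (fun y => φ (q.1, y)) q.2)
    (hd1 : ∀ᶠ y in 𝓝 q.2, DifferentiableAt ℝ (fun y' => φ (q.1, y')) y)
    (hd2 : ∀ i : Fin d,
      DifferentiableAt ℝ (fun y => Dsp φ (q.1, y) (EuclideanSpace.single i 1)) q.2)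
    (l : ES d) : 0 ≤ qf (Hess φ q) l := by
  set line : ℝ → ES d := fun s => q.2 + s • l
  have hline : ∀ s, HasDerivAt line l s := fun s =>
    (((hasDerivAt_id' s).smul_const l).const_add q.2).congr_deriv (one_smul ℝ l)
  have hline0 : line 0 = q.2 := by simp [line]
  have hd1' : ∀ᶠ s in 𝓝 0, DifferentiableAt ℝ (fun y' => φ (q.1, y')) (line s) :=
    (hline 0).continuousAt.tendsto.eventually (hline0 ▸ hd1)
  have hderiv : deriv (fun s => φ (q.1, line s)) =ᶠ[𝓝 0]
      fun s => ∑ i, l i * Dsp φ (q.1, line s) (EuclideanSpace.single i 1) := by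
    filter_upwards [hd1'] with s hs
    exact (hs.hasFDerivAt.comp_hasDerivAt s (hline s)).deriv.trans (apply_eq_sum_mul_single _ l)
  have hderiv2 : HasDerivAt (fun s => ∑ i, l i * Dsp φ (q.1, line s) (EuclideanSpace.single i 1))
      (∑ i, l i * ∑ j, l j * Hess φ q i j) 0 := by
    refine HasDerivAt.fun_sum fun i _ => HasDerivAt.const_mul _ ?_
    have h := (hline0 ▸ (hd2 i).hasFDerivAt).comp_hasDerivAt 0 (hline 0)
    rw [apply_eq_sum_mul_single, hline0] at h
    exact h
  have hsecond := (hline0 ▸ hmin).comp_continuous (hline 0).continuousAt |>.deriv_deriv_nonneg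
    ((hline0 ▸ hd1.self_of_nhds.continuousAt).comp (hline 0).continuousAt)
  rw [Function.comp_def, hderiv.deriv_eq, hderiv2.deriv] at hsecond
  convert hsecond using 1
  simp only [qf, Finset.mul_sum]
  exact Finset.sum_congr rfl fun i _ => Finset.sum_congr rfl fun j _ => by ring

theorem ptd_nonneg_and_qf_Hess_nonneg_of_isMinOn {r : ℝ} {w : ℝ × ES d → ℝ} {q : ℝ × ES d}
    (hw : IsDiff12 (cyl d r) w) (hq : q ∈ cyl d r) (hmin : IsMinOn w (cyl d r) q) :
    0 ≤ ptd w q ∧ ∀ l, 0 ≤ qf (Hess w q) l := by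
  refine ⟨deriv_nonneg_of_isMinOn_Ico hq.1.2 (hw.time q hq) fun s hs => ?_, fun l => ?_⟩
  · exact hmin ⟨⟨hq.1.1.trans hs.1, hs.2⟩, hq.2⟩
  · refine qf_Hess_nonneg_of_isLocalMin ?_ ?_ (hw.grad q hq) l
    · exact (eventually_mem_cyl hq).mono fun y hy => hmin hy
    · exact (eventually_mem_cyl hq).mono fun y hy => hw.space (q.1, y) hy

theorem nonneg_of_ptd_add_aHess_neg {r : ℝ} (hr : 0 < r) {w : ℝ × ES d → ℝ}
    {a : ℝ × ES d → Matrix (Fin d) (Fin d) ℝ} (hw : IsDiff12 (cyl d r) w)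
    (hwc : ContinuousOn w (closure (cyl d r))) (ha : ∀ q ∈ cyl d r, (a q).PosSemidef)
    (hL : ∀ q ∈ cyl d r, ptd w q + aHess (a q) w q < 0) (hbd : ∀ q ∈ pbd (cyl d r), 0 ≤ w q) :
    ∀ q ∈ closure (cyl d r), 0 ≤ w q := by
  have hne : (closure (cyl d r)).Nonempty :=
    ⟨(0, 0), subset_closure ⟨⟨le_rfl, by positivity⟩, by simpa using hr⟩⟩
  obtain ⟨q₀, hq₀, hmin⟩ := (isCompact_closure_cyl hr).exists_isMinOn hne hwc
  by_cases hint : q₀ ∈ cyl d r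
  · obtain ⟨htime, hspace⟩ := ptd_nonneg_and_qf_Hess_nonneg_of_isMinOn hw hint
      (hmin.on_subset subset_closure)
    have := sum_mul_nonneg_of_posSemidef (ha q₀ hint) hspace
    exact absurd (hL q₀ hint) (not_lt.2 (add_nonneg htime this))
  · exact fun q hq => (hbd q₀ ⟨hq₀, hint⟩).trans (hmin hq)

end MinimumPrinciple

section Barrier
variable {d : ℕ} {K μ c γ r t : ℝ}

def gauge (μ r : ℝ) (q : ℝ × ES d) : ℝ := μ * (r ^ 2 - q.1) + ‖q.2‖ ^ 2

def barrier (K μ c γ r : ℝ) (q : ℝ × ES d) : ℝ :=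
  K * gauge μ r q ^ (γ / 2) + c * (r ^ 2 - q.1)

theorem gauge_pos (hμt : 0 < μ * (r ^ 2 - t)) (y : ES d) : 0 < gauge μ r (t, y) :=
  lt_add_of_pos_of_le hμt (sq_nonneg _)

theorem hasDerivAt_barrier_time {y : ES d} (hF : gauge μ r (t, y) ≠ 0) :
    HasDerivAt (fun s => barrier K μ c γ r (s, y))
      (-(K * (γ / 2) * gauge μ r (t, y) ^ (γ / 2 - 1) * μ) - c) t := by
  have hgauge : HasDerivAt (fun s => gauge μ r (s, y)) (-μ) t := by
    simpa [gauge] using (((hasDerivAt_id t).const_sub (r ^ 2)).const_mul μ).add_const (‖y‖ ^ 2)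
  have hlin : HasDerivAt (fun s : ℝ => c * (r ^ 2 - s)) (-c) t := by
    simpa using ((hasDerivAt_id t).const_sub (r ^ 2)).const_mul c
  refine ((((Real.hasDerivAt_rpow_const (p := γ / 2) (Or.inl hF)).comp t hgauge).const_mul K).add
    hlin).congr_deriv ?_
  ring

theorem hasFDerivAt_barrier_space (y : ES d) (hF : gauge μ r (t, y) ≠ 0) :
    HasFDerivAt (fun y' => barrier K μ c γ r (t, y'))
      ((K * γ * gauge μ r (t, y) ^ (γ / 2 - 1)) • innerSL ℝ y) y := by
  have hgauge : HasFDerivAt (fun y' => gauge μ r (t, y')) (2 • innerSL ℝ y) y :=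
    (hasStrictFDerivAt_norm_sq y).hasFDerivAt.const_add (μ * (r ^ 2 - t))
  refine ((((Real.hasDerivAt_rpow_const (p := γ / 2) (Or.inl hF)).comp_hasFDerivAt y
    hgauge).const_mul K).add_const (c * (r ^ 2 - t))).congr_fderiv ?_
  ext l
  simp
  ring

theorem Dsp_barrier_single (hμt : 0 < μ * (r ^ 2 - t)) (y : ES d) (i : Fin d) :
    Dsp (barrier K μ c γ r) (t, y) (EuclideanSpace.single i 1)
      = K * γ * gauge μ r (t, y) ^ (γ / 2 - 1) * y i := by
  rw [Dsp, (hasFDerivAt_barrier_space y (gauge_pos hμt y).ne').fderiv]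
  simp [EuclideanSpace.inner_single_right]

theorem hasFDerivAt_Dsp_barrier_single (hμt : 0 < μ * (r ^ 2 - t)) (y : ES d) (i : Fin d) :
    HasFDerivAt (fun y' => Dsp (barrier K μ c γ r) (t, y') (EuclideanSpace.single i 1))
      ((K * γ) • (gauge μ r (t, y) ^ (γ / 2 - 1) • EuclideanSpace.proj i
        + y i • ((γ / 2 - 1) * gauge μ r (t, y) ^ (γ / 2 - 2) * 2) • innerSL ℝ y)) y := by
  simp only [Dsp_barrier_single hμt]
  have hgauge : HasFDerivAt (fun y' => gauge μ r (t, y')) (2 • innerSL ℝ y) y :=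
    (hasStrictFDerivAt_norm_sq y).hasFDerivAt.const_add (μ * (r ^ 2 - t))
  have hpow := (Real.hasDerivAt_rpow_const (p := γ / 2 - 1)
    (Or.inl (gauge_pos hμt y).ne')).comp_hasFDerivAt y hgauge
  refine ((hpow.const_mul (K * γ)).mul (EuclideanSpace.proj i).hasFDerivAt).congr_fderiv ?_
  ext l
  simp [show γ / 2 - 1 - 1 = γ / 2 - 2 by ring]
  ring

theorem Hess_barrier (hμt : 0 < μ * (r ^ 2 - t)) (y : ES d) :
    Hess (barrier K μ c γ r) (t, y)
      = (K * γ * gauge μ r (t, y) ^ (γ / 2 - 1)) • (1 : Matrix (Fin d) (Fin d) ℝ)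
        + (K * γ * (γ - 2) * gauge μ r (t, y) ^ (γ / 2 - 2)) • Matrix.vecMulVec y y := by
  ext i j
  rw [Hess, (hasFDerivAt_Dsp_barrier_single hμt y i).fderiv]
  simp [Matrix.one_apply, Matrix.vecMulVec_apply, EuclideanSpace.inner_single_right, eq_comm]
  ring

theorem ptd_add_aHess_barrier_le {δ : ℝ} (hδ : 0 < δ) (hK : 0 ≤ K) (hγ : 0 < γ) (hγ2 : γ ≤ 2)
    (hμ : 2 * d * δ⁻¹ ≤ μ) (hμt : 0 < μ * (r ^ 2 - t)) (y : ES d)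
    {a : Matrix (Fin d) (Fin d) ℝ} (ha : a ∈ Sdelta d δ) :
    ptd (barrier K μ c γ r) (t, y) + aHess a (barrier K μ c γ r) (t, y) ≤ -c := by
  have hF := gauge_pos hμt y
  set F := gauge μ r (t, y)
  have hptd : ptd (barrier K μ c γ r) (t, y) = -(K * (γ / 2) * F ^ (γ / 2 - 1) * μ) - c :=
    (hasDerivAt_barrier_time hF.ne').deriv
  have haHess : aHess a (barrier K μ c γ r) (t, y)
      = K * γ * F ^ (γ / 2 - 1) * ∑ i, a i i + K * γ * (γ - 2) * F ^ (γ / 2 - 2) * qf a y := by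
    simp only [aHess, Hess_barrier hμt, Matrix.add_apply, Matrix.smul_apply, Matrix.one_apply,
      Matrix.vecMulVec_apply, smul_eq_mul, qf, mul_add, Finset.sum_add_distrib, Finset.mul_sum]
    congr 1
    · exact Finset.sum_congr rfl fun i _ => by simp [F, mul_comm]
    · exact Finset.sum_congr rfl fun i _ => Finset.sum_congr rfl fun j _ => by ring
  -- the trace term is absorbed by the time derivative since `μ ≥ 2 d / δ`, and the
  -- `|y|²`-term is nonpositive because `γ ≤ 2`
  have htrace : K * γ * F ^ (γ / 2 - 1) * ∑ i, a i i ≤ K * (γ / 2) * F ^ (γ / 2 - 1) * μ := by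
    have hc : 0 ≤ K * γ * F ^ (γ / 2 - 1) := by positivity
    calc K * γ * F ^ (γ / 2 - 1) * ∑ i, a i i ≤ K * γ * F ^ (γ / 2 - 1) * (d * δ⁻¹) :=
          mul_le_mul_of_nonneg_left (trace_le_of_mem_Sdelta ha) hc
      _ ≤ K * (γ / 2) * F ^ (γ / 2 - 1) * μ := by nlinarith
  have hquad : K * γ * (γ - 2) * F ^ (γ / 2 - 2) * qf a y ≤ 0 :=
    mul_nonpos_of_nonpos_of_nonneg
      (mul_nonpos_of_nonpos_of_nonneg (mul_nonpos_of_nonneg_of_nonpos (by positivity)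
        (by linarith)) (by positivity))
      (le_trans (by positivity) (ha.2 y).1)
  linarith

theorem isDiff12_barrier (hμ : 0 < μ) : IsDiff12 (cyl d r) (barrier K μ c γ r) := by
  have hμt : ∀ q ∈ cyl d r, 0 < μ * (r ^ 2 - q.1) := fun q hq => mul_pos hμ (sub_pos.2 hq.1.2)
  exact ⟨fun q hq => (hasDerivAt_barrier_time (gauge_pos (hμt q hq) q.2).ne').differentiableAt,
    fun q hq => (hasFDerivAt_barrier_space q.2 (gauge_pos (hμt q hq) q.2).ne').differentiableAt,
    fun q hq i => (hasFDerivAt_Dsp_barrier_single (hμt q hq) q.2 i).differentiableAt⟩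

theorem continuous_barrier (hγ : 0 < γ) : Continuous (barrier (d := d) K μ c γ r) := by
  unfold barrier gauge
  fun_prop (disch := positivity)

end Barrier

section Comparison
variable {d : ℕ}

theorem le_barrier_of_mem_pbd {K μ c γ r M S : ℝ} (hr : 0 < r) (hμ : 0 ≤ μ) (hc : 0 ≤ c)
    (hγ : 0 < γ) (hK : 0 ≤ K) (hMK : M ≤ K) (hSK : S ≤ K * r ^ γ) {u : ℝ × ES d → ℝ}
    (htop : ∀ x : ES d, ‖x‖ ≤ r → u (r ^ 2, x) ≤ M * ‖x‖ ^ γ)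
    (hside : ∀ q ∈ closure (cyl d r), u q ≤ S) :
    ∀ q ∈ pbd (cyl d r), u q ≤ barrier K μ c γ r q := by
  rintro ⟨t, y⟩ ⟨hcl, hnot⟩
  have hbox := hcl
  rw [closure_cyl hr] at hbox
  obtain ⟨⟨ht0, htr⟩, hy⟩ := hbox
  rw [Metric.mem_closedBall, dist_zero_right] at hy
  rcases htr.eq_or_lt with rfl | htr
  · calc u (r ^ 2, y) ≤ M * ‖y‖ ^ γ := htop y hy
      _ ≤ K * ‖y‖ ^ γ := by gcongr
      _ = barrier K μ c γ r (r ^ 2, y) := by simp [barrier, gauge, sq_rpow_half (norm_nonneg y)]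
  · have hyr : ‖y‖ = r := le_antisymm hy (not_lt.1 fun h => hnot ⟨⟨ht0, htr⟩, h⟩)
    have hgauge : r ^ 2 ≤ gauge μ r (t, y) := by
      simp only [gauge, hyr]
      nlinarith
    calc u (t, y) ≤ S := hside _ hcl
      _ ≤ K * r ^ γ := hSK
      _ = K * (r ^ 2) ^ (γ / 2) := by rw [sq_rpow_half hr.le]
      _ ≤ K * gauge μ r (t, y) ^ (γ / 2) := by gcongr
      _ ≤ barrier K μ c γ r (t, y) := le_add_of_nonneg_right (by nlinarith)

theorem mul_le_barrier {δ γ r M θ S ε σ : ℝ} (hδ : 0 < δ) (hγ : γ ∈ Ioc 0 2) (hr : 0 < r)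
    (hM : 0 ≤ M) (hθ : 0 ≤ θ) (hε : 0 < ε) (hσ : |σ| ≤ 1) {v : ℝ × ES d → ℝ}
    (hv : IsC12 (cyl d r) v) (hvc : ContinuousOn v (closure (cyl d r)))
    (htop : ∀ x : ES d, ‖x‖ ≤ r → |v (r ^ 2, x)| ≤ M * ‖x‖ ^ γ)
    {a : ℝ × ES d → Matrix (Fin d) (Fin d) ℝ} (ha : ∀ q ∈ cyl d r, a q ∈ Sdelta d δ)
    (hL : ∀ q ∈ cyl d r, |ptd v q + aHess (a q) v q| ≤ θ)
    (hS : ∀ q ∈ closure (cyl d r), |v q| ≤ S) :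
    ∀ q ∈ closure (cyl d r),
      σ * v q ≤ barrier (M + r ^ (-γ) * S) (2 * d * δ⁻¹ + 1) (θ + ε) γ r q := by
  set K := M + r ^ (-γ) * S
  set μ : ℝ := 2 * d * δ⁻¹ + 1
  have hμ : 0 < μ := by positivity
  have hS0 : 0 ≤ S := (abs_nonneg _).trans (hS (0, 0) (by
    rw [closure_cyl hr]; exact ⟨⟨le_rfl, by positivity⟩, by simpa using hr.le⟩))
  have hK : 0 ≤ K := by positivity
  have hσabs : ∀ x, σ * x ≤ |x| := fun x =>
    (le_abs_self _).trans (by rw [abs_mul]; exact mul_le_of_le_one_left (abs_nonneg x) hσ)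
  have hSK : S ≤ K * r ^ γ := by
    have : r ^ (-γ) * S * r ^ γ = S := by
      rw [Real.rpow_neg hr.le, mul_comm _ S, mul_assoc, inv_mul_cancel₀ (by positivity), mul_one]
    nlinarith [Real.rpow_nonneg hr.le γ]
  have hw := nonneg_of_ptd_add_aHess_neg hr (w := fun q => barrier K μ (θ + ε) γ r q - σ * v q)
    ((isDiff12_barrier hμ).sub_const_mul σ (fun q hq => eventually_mem_cyl hq) hv.isDiff12)
    ((continuous_barrier hγ.1).continuousOn.sub (continuousOn_const.mul hvc))
    (fun q hq => posSemidef_of_mem_Sdelta hδ.le (ha q hq)) ?_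
    (fun q hq => sub_nonneg.2 (le_barrier_of_mem_pbd hr hμ.le (by positivity) hγ.1 hK
      (le_add_of_nonneg_right (by positivity)) hSK
      (fun x hx => (hσabs _).trans (htop x hx)) (fun q hq => (hσabs _).trans (hS q hq)) q hq))
  · exact fun q hq => sub_nonneg.1 (hw q hq)
  · rintro ⟨t, y⟩ hq
    rw [(isDiff12_barrier hμ).ptd_add_aHess_sub_const_mul σ (fun q hq => eventually_mem_cyl hq)
      hv.isDiff12 hq]
    have hb := ptd_add_aHess_barrier_le (c := θ + ε) hδ hK hγ.1 hγ.2 (by simp [μ])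
      (mul_pos hμ (sub_pos.2 hq.1.2)) y (ha _ hq)
    have hv' := hσabs (-(ptd v (t, y) + aHess (a (t, y)) v (t, y)))
    rw [abs_neg] at hv'
    linarith [hL _ hq]

end Comparison

theorem statement5_general (d : ℕ) (δ : ℝ) (hδ : δ ∈ Set.Ioc (0 : ℝ) 1)
    (γ : ℝ) (hγ : γ ∈ Set.Ioc (0 : ℝ) 2) :
    ∃ N : ℝ, 0 < N ∧
      ∀ (r M θ S : ℝ), 0 < r → 0 ≤ M → 0 ≤ θ →
        ∀ v : ℝ × ES d → ℝ, IsC12 (cyl d r) v → ContinuousOn v (closure (cyl d r)) →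
          (∀ x : ES d, ‖x‖ ≤ r → |v (r ^ 2, x)| ≤ M * ‖x‖ ^ γ) →
          ∀ a : ℝ × ES d → Matrix (Fin d) (Fin d) ℝ,
            (∀ q ∈ cyl d r, a q ∈ Sdelta d δ) →
            (∀ q ∈ cyl d r, |ptd v q + aHess (a q) v q| ≤ θ) →
            (∀ q ∈ cyl d r, |v q| ≤ S) →
            ∀ t ∈ Set.Icc (0 : ℝ) (r ^ 2),
              |v (t, (0 : ES d))| ≤
                N * (M + r ^ (-γ) * S) * (r ^ 2 - t) ^ (γ / 2) + θ * (r ^ 2 - t) := by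
  have hμ : (0 : ℝ) < 2 * d * δ⁻¹ + 1 := by have := hδ.1; positivity
  refine ⟨(2 * d * δ⁻¹ + 1) ^ (γ / 2), Real.rpow_pos_of_pos hμ _, ?_⟩
  intro r M θ S hr hM hθ v hv hvc htop a ha hL hS t ht
  have hS' : ∀ q ∈ closure (cyl d r), |v q| ≤ S := by
    have hmaps : MapsTo v (closure (cyl d r)) (closure {x | |x| ≤ S}) :=
      MapsTo.closure_of_continuousOn hS hvc
    rwa [(isClosed_le continuous_abs continuous_const).closure_eq] at hmaps
  have hmem : (t, (0 : ES d)) ∈ closure (cyl d r) := by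
    rw [closure_cyl hr]; exact ⟨ht, by simpa using hr.le⟩
  have hT : 0 ≤ r ^ 2 - t := sub_nonneg.2 ht.2
  refine le_of_forall_pos_le_add_mul (T := r ^ 2 - t) fun ε hε => ?_
  have hbarrier : barrier (M + r ^ (-γ) * S) (2 * d * δ⁻¹ + 1) (θ + ε) γ r (t, (0 : ES d))
      = (2 * d * δ⁻¹ + 1) ^ (γ / 2) * (M + r ^ (-γ) * S) * (r ^ 2 - t) ^ (γ / 2)
        + θ * (r ^ 2 - t) + ε * (r ^ 2 - t) := by
    simp [barrier, gauge, Real.mul_rpow hμ.le hT]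
    ring
  have hup := mul_le_barrier hδ.1 hγ hr hM hθ hε (σ := 1) (by simp) hv hvc htop ha hL hS' _ hmem
  have hlow := mul_le_barrier hδ.1 hγ hr hM hθ hε (σ := -1) (by simp) hv hvc htop ha hL hS' _ hmem
  rw [hbarrier] at hup hlow
  exact abs_le.2 ⟨by linarith, by linarith⟩

/-- pointwise decay estimate on the axis of the cylinder. -/
theorem statement5 (d : ℕ) (hd : 1 ≤ d) (δ : ℝ) (hδ : δ ∈ Set.Ioc (0 : ℝ) 1)
    (γ : ℝ) (hγ : γ ∈ Set.Ioc (0 : ℝ) 2) :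
    ∃ N : ℝ, 0 < N ∧
      ∀ (r M θ S : ℝ), 0 < r → 0 ≤ M → 0 ≤ θ →
        ∀ v : ℝ × ES d → ℝ, IsC12 (cyl d r) v → ContinuousOn v (closure (cyl d r)) →
          (∀ x : ES d, ‖x‖ ≤ r → |v (r ^ 2, x)| ≤ M * ‖x‖ ^ γ) →
          ∀ a : ℝ × ES d → Matrix (Fin d) (Fin d) ℝ,
            (∀ q ∈ cyl d r, a q ∈ Sdelta d δ) →
            (∀ q ∈ cyl d r, |ptd v q + aHess (a q) v q| ≤ θ) →
            (∀ q ∈ cyl d r, |v q| ≤ S) →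
            ∀ t ∈ Set.Icc (0 : ℝ) (r ^ 2),
              |v (t, (0 : ES d))| ≤
                N * (M + r ^ (-γ) * S) * (r ^ 2 - t) ^ (γ / 2) + θ * (r ^ 2 - t) :=
  statement5_general d δ hδ γ hγ

end Krylov
end
end

section
/- Let d ≥ 1, r₀ ∈ (0,∞), κ ∈ (1,2), N₀ ∈ [0,∞), and let φ ∈ C^κ(C_{r₀}). Assume that for every (t,x) ∈ C_{r₀} and every r ∈ (0,2r₀] there exists an affine function φ̂ = φ̂(x) of x alone such that sup_{C_r(t,x) ∩ C_{r₀}} |φ − φ̂| ≤ N₀ r^κ. Then [φ]_{C^κ(C_{r₀})} ≤ N N₀, where N depends only on d and κ. -/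
open Set MeasureTheory

noncomputable section

namespace Krylov

attribute [local instance] Matrix.normedAddCommGroup Matrix.normedSpace

/-!
Fix the time `t`. If two affine functions both approximate `φ(t, ·)` within `ε₁`, `ε₂` on a
ball of radius `ρ` (intersected with `B_{r₀}`, which still contains a ball of radius `ρ / 2`),
their slopes differ by `O((ε₁ + ε₂) / ρ)`. Hence the slopes `b_{ρ 2⁻ⁿ}` of the approximations
at `x` on dyadic radii form a geometric Cauchy sequence; its limit is `Dφ(t, x)`, so
`|Dφ(t, x) - b_ρ| ≲ N₀ ρ^{κ-1}`. Comparing `x` and `y` through the approximation at their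
midpoint with `ρ ≈ |x - y|` gives the Hölder bound for `Dφ`. In time, the approximation on
the cylinder based at `(s, x)` of height `2 (t - s)` is a single constant along `{x} × [s, t]`,
so `|φ(t, x) - φ(s, x)| ≤ 2 N₀ (2 (t - s))^{κ/2}`.
-/

open Filter Topology Metric

theorem one_sub_two_rpow_one_sub_pos {κ : ℝ} (hκ : 1 < κ) : 0 < 1 - (2 : ℝ) ^ (1 - κ) :=
  sub_pos.2 (Real.rpow_lt_one_of_one_lt_of_neg one_lt_two (by linarith))

theorem rpow_div_two_pow {ρ : ℝ} (hρ : 0 ≤ ρ) (p : ℝ) (n : ℕ) :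
    (ρ / 2 ^ n) ^ p = ρ ^ p * ((2 : ℝ) ^ (-p)) ^ n := by
  rw [Real.div_rpow hρ (by positivity), div_eq_mul_inv, ← Real.rpow_natCast,
    ← Real.rpow_natCast, ← Real.rpow_mul (by norm_num), ← Real.rpow_mul (by norm_num),
    ← Real.rpow_neg (by positivity), neg_mul, mul_comm (n : ℝ)]

section AffineApprox

variable {E : Type*} [NormedAddCommGroup E] [NormedSpace ℝ E]

theorem norm_sub_le_of_affine_approx_on_ball {f : E → ℝ} {x : E} {ρ c₁ c₂ ε₁ ε₂ : ℝ}
    {b₁ b₂ : E →L[ℝ] ℝ} (hρ : 0 < ρ)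
    (h₁ : ∀ y ∈ ball x ρ, |f y - (c₁ + b₁ y)| ≤ ε₁)
    (h₂ : ∀ y ∈ ball x ρ, |f y - (c₂ + b₂ y)| ≤ ε₂) :
    ‖b₁ - b₂‖ ≤ 4 * (ε₁ + ε₂) / ρ := by
  have hbound : ∀ z ∈ closedBall (0 : E) (ρ / 2), ‖(b₁ - b₂) z‖ ≤ 2 * (ε₁ + ε₂) := by
    intro z hz
    have hxz : x + z ∈ ball x ρ := by
      rw [mem_closedBall_zero_iff] at hz
      simpa using hz.trans_lt (half_lt_self hρ)
    have hx : x ∈ ball x ρ := mem_ball_self hρ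
    have e₁ := abs_le.1 (h₁ _ hxz)
    have e₂ := abs_le.1 (h₂ _ hxz)
    have e₃ := abs_le.1 (h₁ _ hx)
    have e₄ := abs_le.1 (h₂ _ hx)
    simp only [map_add] at e₁ e₂
    rw [sub_apply, Real.norm_eq_abs, abs_le]
    constructor <;> linarith
  calc ‖b₁ - b₂‖ ≤ 2 * (ε₁ + ε₂) / (ρ / 2) :=
        ContinuousLinearMap.opNorm_bound_of_ball_bound (half_pos hρ) _ _ hbound
    _ = 4 * (ε₁ + ε₂) / ρ := by field_simp; ring

theorem exists_ball_subset_ball_inter_ball {a x : E} {R ρ : ℝ} (hx : x ∈ ball a R)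
    (hρ : 0 < ρ) (hρR : ρ ≤ 2 * R) :
    ∃ x', ball x' (ρ / 2) ⊆ ball x ρ ∩ ball a R := by
  have hR : 0 < R := pos_of_mem_ball hx
  rw [mem_ball] at hx
  set θ : ℝ := ρ / (2 * R)
  have hθ0 : 0 ≤ θ := by positivity
  have hθ1 : θ ≤ 1 := by rw [div_le_one (by positivity)]; exact hρR
  have hθR : θ * R = ρ / 2 := by rw [div_mul_eq_mul_div, mul_div_mul_right _ _ hR.ne']
  refine ⟨AffineMap.lineMap x a θ, fun y hy => ⟨?_, ?_⟩⟩
  · have : dist (AffineMap.lineMap x a θ) x ≤ ρ / 2 := by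
      rw [dist_lineMap_left, Real.norm_of_nonneg hθ0, ← hθR]
      exact mul_le_mul_of_nonneg_left hx.le hθ0
    exact mem_ball.2 ((dist_triangle _ _ _).trans_lt (by linarith [mem_ball.1 hy]))
  · have : dist (AffineMap.lineMap x a θ) a ≤ R - ρ / 2 := by
      rw [dist_lineMap_right, Real.norm_of_nonneg (by linarith)]
      nlinarith
    exact mem_ball.2 ((dist_triangle _ _ _).trans_lt (by linarith [mem_ball.1 hy]))

theorem norm_sub_le_of_affine_approx {f : E → ℝ} {a x : E} {R ρ c₁ c₂ ε₁ ε₂ : ℝ}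
    {b₁ b₂ : E →L[ℝ] ℝ} (hx : x ∈ ball a R) (hρ : 0 < ρ) (hρR : ρ ≤ 2 * R)
    (h₁ : ∀ y ∈ ball x ρ ∩ ball a R, |f y - (c₁ + b₁ y)| ≤ ε₁)
    (h₂ : ∀ y ∈ ball x ρ ∩ ball a R, |f y - (c₂ + b₂ y)| ≤ ε₂) :
    ‖b₁ - b₂‖ ≤ 8 * (ε₁ + ε₂) / ρ := by
  obtain ⟨x', hx'⟩ := exists_ball_subset_ball_inter_ball hx hρ hρR
  calc ‖b₁ - b₂‖ ≤ 4 * (ε₁ + ε₂) / (ρ / 2) :=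
        norm_sub_le_of_affine_approx_on_ball (half_pos hρ) (fun y hy => h₁ y (hx' hy))
          (fun y hy => h₂ y (hx' hy))
    _ = 8 * (ε₁ + ε₂) / ρ := by field_simp; ring

section Family

variable {f : E → ℝ} {a x : E} {R N₀ κ : ℝ} {c : ℝ → ℝ} {b : ℝ → E →L[ℝ] ℝ}

theorem norm_sub_half_le_of_affine_approx (hκ : 0 ≤ κ) (hN₀ : 0 ≤ N₀) (hx : x ∈ ball a R)
    (happrox : ∀ r ∈ Ioc 0 (2 * R), ∀ y ∈ ball x r ∩ ball a R,
      |f y - (c r + b r y)| ≤ N₀ * r ^ κ)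
    {r : ℝ} (hr : r ∈ Ioc 0 (2 * R)) :
    ‖b r - b (r / 2)‖ ≤ 32 * N₀ * r ^ (κ - 1) := by
  have hr2 : r / 2 ∈ Ioc 0 (2 * R) := ⟨half_pos hr.1, by linarith [hr.1, hr.2]⟩
  have hmono : N₀ * (r / 2) ^ κ ≤ N₀ * r ^ κ := by
    gcongr
    · exact hr2.1.le
    · linarith [hr.1]
  calc ‖b r - b (r / 2)‖ ≤ 8 * (N₀ * r ^ κ + N₀ * r ^ κ) / (r / 2) :=
        norm_sub_le_of_affine_approx hx hr2.1 hr2.2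
          (fun y hy => happrox r hr y ⟨ball_subset_ball (by linarith [hr.1]) hy.1, hy.2⟩)
          (fun y hy => (happrox _ hr2 y hy).trans hmono)
    _ = 32 * N₀ * (r ^ κ / r) := by field_simp; ring
    _ = 32 * N₀ * r ^ (κ - 1) := by rw [Real.rpow_sub_one hr.1.ne']

theorem tendsto_slope_of_affine_approx (hκ : 1 < κ) (hx : x ∈ ball a R)
    (hf : DifferentiableAt ℝ f x)
    (happrox : ∀ r ∈ Ioc 0 (2 * R), ∀ y ∈ ball x r ∩ ball a R,
      |f y - (c r + b r y)| ≤ N₀ * r ^ κ) :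
    Tendsto b (𝓝[>] 0) (𝓝 (fderiv ℝ f x)) := by
  rw [Metric.tendsto_nhds]
  intro ε hε
  have hsmall : Tendsto (fun r : ℝ => 8 * N₀ * r ^ (κ - 1)) (𝓝[>] 0) (𝓝 0) := by
    have := ((Real.continuousAt_rpow_const 0 (κ - 1) (Or.inr (by linarith))).const_mul
      (8 * N₀)).mono_left (nhdsWithin_le_nhds (s := Ioi 0))
    simpa [Real.zero_rpow (by linarith : κ - 1 ≠ 0)] using this
  obtain ⟨δ, hδ, hderiv⟩ := Metric.eventually_nhds_iff.1
    (hf.hasFDerivAt.isLittleO.bound (show (0 : ℝ) < ε / 16 by positivity))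
  have hR : Ioo 0 (min δ (2 * R)) ∈ 𝓝[>] (0 : ℝ) :=
    Ioo_mem_nhdsGT (lt_min hδ (by linarith [pos_of_mem_ball hx]))
  filter_upwards [hR, hsmall.eventually (gt_mem_nhds (half_pos hε))] with r hr hr8
  have hlin : ∀ y ∈ ball x r ∩ ball a R,
      |f y - ((f x - fderiv ℝ f x x) + fderiv ℝ f x y)| ≤ ε / 16 * r := by
    intro y hy
    have hyx : dist y x < r := hy.1
    have := hderiv (hyx.trans (hr.2.trans_le (min_le_left _ _)))
    rw [Real.norm_eq_abs, map_sub] at this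
    calc |f y - ((f x - fderiv ℝ f x x) + fderiv ℝ f x y)|
        = |f y - f x - (fderiv ℝ f x y - fderiv ℝ f x x)| := by ring_nf
      _ ≤ ε / 16 * ‖y - x‖ := this
      _ ≤ ε / 16 * r := by rw [← dist_eq_norm]; gcongr
  have hbound := norm_sub_le_of_affine_approx hx hr.1 ((hr.2.trans_le (min_le_right _ _)).le)
    (happrox r ⟨hr.1, (hr.2.trans_le (min_le_right _ _)).le⟩) hlin
  rw [dist_eq_norm]
  calc ‖b r - fderiv ℝ f x‖ ≤ 8 * (N₀ * r ^ κ + ε / 16 * r) / r := hbound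
    _ = 8 * N₀ * r ^ (κ - 1) + ε / 2 := by
        have hr0 : r ≠ 0 := hr.1.ne'
        rw [Real.rpow_sub_one hr0]; field_simp; ring
    _ < ε := by linarith

theorem norm_fderiv_sub_le_of_affine_approx (hκ : 1 < κ) (hN₀ : 0 ≤ N₀)
    (hx : x ∈ ball a R) (hf : DifferentiableAt ℝ f x)
    (happrox : ∀ r ∈ Ioc 0 (2 * R), ∀ y ∈ ball x r ∩ ball a R,
      |f y - (c r + b r y)| ≤ N₀ * r ^ κ)
    {ρ : ℝ} (hρ : ρ ∈ Ioc 0 (2 * R)) :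
    ‖fderiv ℝ f x - b ρ‖ ≤ 32 * N₀ * ρ ^ (κ - 1) / (1 - 2 ^ (1 - κ)) := by
  have hs : (2 : ℝ) ^ (1 - κ) < 1 := sub_pos.1 (one_sub_two_rpow_one_sub_pos hκ)
  have hρn : ∀ n : ℕ, ρ / 2 ^ n ∈ Ioc 0 (2 * R) := fun n =>
    ⟨by have := hρ.1; positivity, (div_le_self hρ.1.le (one_le_pow₀ one_le_two)).trans hρ.2⟩
  have hstep : ∀ n : ℕ, dist (b (ρ / 2 ^ n)) (b (ρ / 2 ^ (n + 1))) ≤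
      32 * N₀ * ρ ^ (κ - 1) * (2 ^ (1 - κ)) ^ n := by
    intro n
    rw [dist_eq_norm, pow_succ, ← div_div, mul_assoc, ← neg_sub κ 1,
      ← rpow_div_two_pow hρ.1.le]
    exact norm_sub_half_le_of_affine_approx (by linarith) hN₀ hx happrox (hρn n)
  have hlim : Tendsto (fun n : ℕ => b (ρ / 2 ^ n)) atTop (𝓝 (fderiv ℝ f x)) := by
    refine (tendsto_slope_of_affine_approx hκ hx hf happrox).comp
      (tendsto_nhdsWithin_iff.2 ⟨?_, Eventually.of_forall fun n => (hρn n).1⟩)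
    simpa using tendsto_const_nhds.div_atTop (tendsto_pow_atTop_atTop_of_one_lt one_lt_two)
  rw [norm_sub_rev, ← dist_eq_norm]
  simpa using dist_le_of_le_geometric_of_tendsto₀ _ _ hs hstep hlim

end Family

theorem norm_fderiv_sub_fderiv_le_of_affine_approx {f : E → ℝ} {a : E} {R N₀ κ : ℝ}
    (hκ : 1 < κ) (hN₀ : 0 ≤ N₀) (hf : ∀ x ∈ ball a R, DifferentiableAt ℝ f x)
    (happrox : ∀ x ∈ ball a R, ∀ r ∈ Ioc 0 (2 * R), ∃ (c : ℝ) (b : E →L[ℝ] ℝ),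
      ∀ y ∈ ball x r ∩ ball a R, |f y - (c + b y)| ≤ N₀ * r ^ κ)
    {x y : E} (hx : x ∈ ball a R) (hy : y ∈ ball a R) :
    ‖fderiv ℝ f x - fderiv ℝ f y‖ ≤
      (64 / (1 - 2 ^ (1 - κ)) + 16 * (1 + 2 ^ κ)) * N₀ * ‖x - y‖ ^ (κ - 1) := by
  choose! c b hcb using happrox
  have hK : 0 < 32 / (1 - (2 : ℝ) ^ (1 - κ)) + 8 * (1 + 2 ^ κ) :=
    add_pos (div_pos (by norm_num) (one_sub_two_rpow_one_sub_pos hκ)) (by positivity)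
  rcases eq_or_ne x y with rfl | hxy
  · rw [sub_self, norm_zero]
    have := div_pos (by norm_num : (0 : ℝ) < 64) (one_sub_two_rpow_one_sub_pos hκ)
    positivity
  set r := ‖x - y‖
  have hr : 0 < r := norm_pos_iff.2 (sub_ne_zero.2 hxy)
  have hr2R : r < 2 * R := by
    have := dist_triangle_right x y a
    rw [dist_eq_norm] at this
    linarith [mem_ball.1 hx, mem_ball.1 hy]
  set ρ := min r R
  have hρ : 0 < ρ := lt_min hr (pos_of_mem_ball hx)
  have hρR : ρ ≤ R := min_le_right _ _
  have hrρ : r / 2 < ρ := lt_min (half_lt_self hr) (by linarith)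
  set m := midpoint ℝ x y
  have hm : m ∈ ball a R := (convex_ball a R).midpoint_mem hx hy
  -- `r / 2 < ρ`, so `B_ρ(z) ⊆ B_{2ρ}(m)` whenever `|z - m| ≤ r / 2`
  have hnear : ∀ z ∈ ball a R, dist z m ≤ r / 2 →
      ‖fderiv ℝ f z - b m (2 * ρ)‖ ≤
        (32 / (1 - 2 ^ (1 - κ)) + 8 * (1 + 2 ^ κ)) * N₀ * ρ ^ (κ - 1) := by
    intro z hz hzm
    have hρ2 : ρ ∈ Ioc 0 (2 * R) := ⟨hρ, by linarith⟩
    have hgrad := norm_fderiv_sub_le_of_affine_approx hκ hN₀ hz (hf z hz) (hcb z hz) hρ2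
    have hslope : ‖b z ρ - b m (2 * ρ)‖ ≤ 8 * (N₀ * ρ ^ κ + N₀ * (2 * ρ) ^ κ) / ρ :=
      norm_sub_le_of_affine_approx hz hρ hρ2.2 (hcb z hz ρ hρ2) fun w hw =>
        hcb m hm (2 * ρ) ⟨by positivity, by linarith⟩ w
          ⟨mem_ball.2 (by linarith [dist_triangle w z m, mem_ball.1 hw.1]), hw.2⟩
    have hslope' : 8 * (N₀ * ρ ^ κ + N₀ * (2 * ρ) ^ κ) / ρ =
        8 * (1 + 2 ^ κ) * N₀ * ρ ^ (κ - 1) := by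
      rw [Real.mul_rpow zero_le_two hρ.le, Real.rpow_sub_one hρ.ne']
      ring
    calc ‖fderiv ℝ f z - b m (2 * ρ)‖ ≤ ‖fderiv ℝ f z - b z ρ‖ + ‖b z ρ - b m (2 * ρ)‖ :=
          norm_sub_le_norm_sub_add_norm_sub _ _ _
      _ ≤ 32 * N₀ * ρ ^ (κ - 1) / (1 - 2 ^ (1 - κ)) + 8 * (1 + 2 ^ κ) * N₀ * ρ ^ (κ - 1) :=
          add_le_add hgrad (hslope.trans_eq hslope')
      _ = _ := by ring
  have hxm : dist x m ≤ r / 2 := by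
    rw [dist_left_midpoint, dist_eq_norm, Real.norm_two]; linarith
  have hym : dist y m ≤ r / 2 := by
    rw [dist_right_midpoint, dist_eq_norm, Real.norm_two]; linarith
  calc ‖fderiv ℝ f x - fderiv ℝ f y‖
      ≤ ‖fderiv ℝ f x - b m (2 * ρ)‖ + ‖fderiv ℝ f y - b m (2 * ρ)‖ := by
        rw [norm_sub_rev (fderiv ℝ f y)]; exact norm_sub_le_norm_sub_add_norm_sub _ _ _
    _ ≤ 2 * ((32 / (1 - 2 ^ (1 - κ)) + 8 * (1 + 2 ^ κ)) * N₀ * ρ ^ (κ - 1)) := by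
        linarith [hnear x hx hxm, hnear y hy hym]
    _ ≤ 2 * ((32 / (1 - 2 ^ (1 - κ)) + 8 * (1 + 2 ^ κ)) * N₀ * r ^ (κ - 1)) := by
        gcongr
        exact min_le_left _ _
    _ = (64 / (1 - 2 ^ (1 - κ)) + 16 * (1 + 2 ^ κ)) * N₀ * r ^ (κ - 1) := by ring

end AffineApprox

theorem mk_mem_cyl_iff {d : ℕ} {R t : ℝ} {x : ES d} :
    (t, x) ∈ cyl d R ↔ t ∈ Ico 0 (R ^ 2) ∧ x ∈ ball 0 R := by
  rw [mem_ball_zero_iff]; rfl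

section Cylinder

variable {d : ℕ} {φ : ℝ × ES d → ℝ} {r₀ N₀ κ : ℝ}

theorem abs_sub_le_of_affine_approx_of_lt (hN₀ : 0 ≤ N₀)
    (happrox : ∀ z ∈ cyl d r₀, ∀ r ∈ Ioc 0 (2 * r₀), ∃ (c : ℝ) (b : ES d →L[ℝ] ℝ),
      ∀ q ∈ cylAt z r ∩ cyl d r₀, |φ q - (c + b q.2)| ≤ N₀ * r ^ κ)
    {t s : ℝ} {x : ES d} (ht : (t, x) ∈ cyl d r₀) (hs : (s, x) ∈ cyl d r₀) (hst : s < t) :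
    |φ (t, x) - φ (s, x)| ≤ 2 * 2 ^ (κ / 2) * N₀ * (t - s) ^ (κ / 2) := by
  -- a cylinder of height `r² = 2 (t - s)` based at `(s, x)` reaches `(t, x)`
  set r := √(2 * (t - s))
  have hr : 0 < r := Real.sqrt_pos.2 (by linarith)
  have hr2 : r ^ 2 = 2 * (t - s) := Real.sq_sqrt (by linarith)
  have hr2r₀ : r ≤ 2 * r₀ := by
    have hr₀ : 0 < r₀ := (norm_nonneg x).trans_lt ht.2
    nlinarith [ht.1.2, hs.1.1]
  obtain ⟨c, b, hcb⟩ := happrox (s, x) hs r ⟨hr, hr2r₀⟩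
  have hmem : ∀ u, u - s ∈ Ico 0 (r ^ 2) → (u, x) ∈ cyl d r₀ → (u, x) ∈ cylAt (s, x) r ∩ cyl d r₀ :=
    fun u hu hux => ⟨⟨hu, by simpa using hr⟩, hux⟩
  have e₁ := abs_le.1 (hcb _ (hmem t ⟨by linarith, by linarith⟩ ht))
  have e₂ := abs_le.1 (hcb _ (hmem s ⟨by simp, by simp; positivity⟩ hs))
  have hrκ : r ^ κ = 2 ^ (κ / 2) * (t - s) ^ (κ / 2) := by
    change √(2 * (t - s)) ^ κ = _
    rw [Real.sqrt_eq_rpow, ← Real.rpow_mul (by linarith), one_div_mul_eq_div,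
      Real.mul_rpow zero_le_two (by linarith)]
  rw [abs_le]
  constructor <;> nlinarith

theorem abs_sub_le_of_affine_approx (hN₀ : 0 ≤ N₀) (hκ : 0 < κ)
    (happrox : ∀ z ∈ cyl d r₀, ∀ r ∈ Ioc 0 (2 * r₀), ∃ (c : ℝ) (b : ES d →L[ℝ] ℝ),
      ∀ q ∈ cylAt z r ∩ cyl d r₀, |φ q - (c + b q.2)| ≤ N₀ * r ^ κ)
    {t s : ℝ} {x : ES d} (ht : (t, x) ∈ cyl d r₀) (hs : (s, x) ∈ cyl d r₀) :
    |φ (t, x) - φ (s, x)| ≤ 2 * 2 ^ (κ / 2) * N₀ * |t - s| ^ (κ / 2) := by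
  rcases lt_trichotomy s t with hst | rfl | hts
  · rw [abs_of_pos (sub_pos.2 hst)]
    exact abs_sub_le_of_affine_approx_of_lt hN₀ happrox ht hs hst
  · simp [Real.zero_rpow (by positivity : κ / 2 ≠ 0)]
  · rw [abs_sub_comm, abs_sub_comm t, abs_of_pos (sub_pos.2 hts)]
    exact abs_sub_le_of_affine_approx_of_lt hN₀ happrox hs ht hts

theorem affine_approx_slice
    (happrox : ∀ z ∈ cyl d r₀, ∀ r ∈ Ioc 0 (2 * r₀), ∃ (c : ℝ) (b : ES d →L[ℝ] ℝ),
      ∀ q ∈ cylAt z r ∩ cyl d r₀, |φ q - (c + b q.2)| ≤ N₀ * r ^ κ)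
    {t : ℝ} (ht : t ∈ Ico 0 (r₀ ^ 2)) :
    ∀ x ∈ ball (0 : ES d) r₀, ∀ r ∈ Ioc 0 (2 * r₀), ∃ (c : ℝ) (b : ES d →L[ℝ] ℝ),
      ∀ y ∈ ball x r ∩ ball 0 r₀, |φ (t, y) - (c + b y)| ≤ N₀ * r ^ κ := by
  intro x hx r hr
  obtain ⟨c, b, hcb⟩ := happrox (t, x) (mk_mem_cyl_iff.2 ⟨ht, hx⟩) r hr
  refine ⟨c, b, fun y hy => hcb (t, y) ⟨⟨?_, ?_⟩, mk_mem_cyl_iff.2 ⟨ht, hy.2⟩⟩⟩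
  · simpa using sq_pos_of_pos hr.1
  · simpa [dist_eq_norm] using hy.1

end Cylinder

theorem statement12_general (d : ℕ) (κ : ℝ) (hκ : κ ∈ Set.Ioo (1 : ℝ) 2) :
    ∃ N : ℝ, 0 < N ∧
      ∀ (r₀ N₀ : ℝ), 0 < r₀ → 0 ≤ N₀ →
        ∀ φ : ℝ × ES d → ℝ, MemCk κ (cyl d r₀) φ →
          (∀ z ∈ cyl d r₀, ∀ r ∈ Set.Ioc (0 : ℝ) (2 * r₀),
            ∃ (c : ℝ) (b : ES d →L[ℝ] ℝ),
              ∀ q ∈ cylAt z r ∩ cyl d r₀, |φ q - (c + b q.2)| ≤ N₀ * r ^ κ) →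
          HSemiLE κ (cyl d r₀) φ (N * N₀) := by
  obtain ⟨hκ1, -⟩ := hκ
  have hA : 0 < 2 * (2 : ℝ) ^ (κ / 2) := by positivity
  have hB : 0 < 64 / (1 - (2 : ℝ) ^ (1 - κ)) + 16 * (1 + 2 ^ κ) :=
    add_pos (div_pos (by norm_num) (one_sub_two_rpow_one_sub_pos hκ1)) (by positivity)
  refine ⟨_, add_pos hA hB, fun r₀ N₀ _ hN₀ φ hφ happrox => ⟨?_, ?_⟩⟩
  · intro t s x ht hs
    calc |φ (t, x) - φ (s, x)| ≤ 2 * 2 ^ (κ / 2) * N₀ * |t - s| ^ (κ / 2) :=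
          abs_sub_le_of_affine_approx hN₀ (by linarith) happrox ht hs
      _ ≤ _ := by gcongr ?_ * _ * _; linarith
  · intro t x y hx hy
    have hslice := affine_approx_slice happrox (mk_mem_cyl_iff.1 hx).1
    calc ‖Dsp φ (t, x) - Dsp φ (t, y)‖
        ≤ (64 / (1 - 2 ^ (1 - κ)) + 16 * (1 + 2 ^ κ)) * N₀ * ‖x - y‖ ^ (κ - 1) :=
          norm_fderiv_sub_fderiv_le_of_affine_approx hκ1 hN₀
            (fun z hz => hφ.1 (t, z) (mk_mem_cyl_iff.2 ⟨(mk_mem_cyl_iff.1 hx).1, hz⟩)) hslice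
            (mk_mem_cyl_iff.1 hx).2 (mk_mem_cyl_iff.1 hy).2
      _ ≤ _ := by gcongr ?_ * _ * _; linarith

/-- characterization of `C^κ` functions via affine approximation. -/
theorem statement12 (d : ℕ) (hd : 1 ≤ d) (κ : ℝ) (hκ : κ ∈ Set.Ioo (1 : ℝ) 2) :
    ∃ N : ℝ, 0 < N ∧
      ∀ (r₀ N₀ : ℝ), 0 < r₀ → 0 ≤ N₀ →
        ∀ φ : ℝ × ES d → ℝ, MemCk κ (cyl d r₀) φ →
          (∀ z ∈ cyl d r₀, ∀ r ∈ Set.Ioc (0 : ℝ) (2 * r₀),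
            ∃ (c : ℝ) (b : ES d →L[ℝ] ℝ),
              ∀ q ∈ cylAt z r ∩ cyl d r₀, |φ q - (c + b q.2)| ≤ N₀ * r ^ κ) →
          HSemiLE κ (cyl d r₀) φ (N * N₀) :=
  statement12_general d κ hκ

end Krylov
end
end
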